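/- (Peierls–Bogoliubov inequality) If H and A are Hermitian matrices with Tr(e^{−H}) = 1, then Tr(e^{−H+A}) ≥ exp(Tr(A e^{−H})). -/

import Mathlib

open Matrix Kronecker
open scoped ComplexOrder

noncomputable def mexp {n : Type*} [Fintype n] [DecidableEq n] (A : Matrix n n ℂ) : Matrix n n ℂ :=
  if h : A.IsHermitian then h.cfc Real.exp else 0

noncomputable def mlog {n : Type*} [Fintype n] [DecidableEq n] (A : Matrix n n ℂ) : Matrix n n ℂ :=
  if h : A.IsHermitian then h.cfc Real.log else 0

open scoped Classical in
noncomputable def msqrt {n : Type*} [Fintype n] [DecidableEq n] (A : Matrix n n ℂ) : Matrix n n ℂ :=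
  if h : A.PosSemidef then
    (h.1.eigenvectorUnitary : Matrix n n ℂ) * diagonal (((↑) : ℝ → ℂ) ∘ Real.sqrt ∘ h.1.eigenvalues) *
      (star h.1.eigenvectorUnitary : Matrix n n ℂ) else 0

noncomputable def entropy {n : Type*} [Fintype n] [DecidableEq n] (ρ : Matrix n n ℂ) : ℝ :=
  -((ρ * mlog ρ).trace.re)

noncomputable def relEnt {n : Type*} [Fintype n] [DecidableEq n] (ρ σ : Matrix n n ℂ) : ℝ :=
  ((ρ * (mlog ρ - mlog σ)).trace.re)

noncomputable def ptrace₂ {n m : Type*} [Fintype n] [Fintype m]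
    (ρ : Matrix (n × m) (n × m) ℂ) : Matrix n n ℂ :=
  Matrix.of fun i j => ∑ k, ρ (i, k) (j, k)

noncomputable def ptrace₁ {n m : Type*} [Fintype n] [Fintype m]
    (ρ : Matrix (n × m) (n × m) ℂ) : Matrix m m ℂ :=
  Matrix.of fun i j => ∑ k, ρ (k, i) (k, j)

noncomputable def traceNorm {n : Type*} [Fintype n] [DecidableEq n] (A : Matrix n n ℂ) : ℝ :=
  (((Matrix.posSemidef_conjTranspose_mul_self A).1.eigenvectorUnitary : Matrix n n ℂ) *
    diagonal (((↑) : ℝ → ℂ) ∘ Real.sqrt ∘ (Matrix.posSemidef_conjTranspose_mul_self A).1.eigenvalues) *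
    (star (Matrix.posSemidef_conjTranspose_mul_self A).1.eigenvectorUnitary : Matrix n n ℂ)).trace.re

/-! Diagonalize `-H` with eigenvectors `vᵢ` and eigenvalues `νᵢ`. Since `Tr e^{-H} = 1`, the
weights `pᵢ = e^{νᵢ}` form a probability vector and `Tr (A e^{-H}) = ∑ pᵢ ⟨vᵢ, A vᵢ⟩`, so Jensen's
inequality for `exp` gives `exp Tr (A e^{-H}) ≤ ∑ e^{⟨vᵢ, (-H + A) vᵢ⟩}`. Peierls' inequality
`∑ f ⟨vᵢ, M vᵢ⟩ ≤ Tr f(M)` for convex `f` and any orthonormal basis bounds this by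
`Tr e^{-H + A}`: the diagonal of `M` in the basis `vᵢ` is a doubly stochastic average of the
eigenvalues of `M`. -/

namespace Matrix

variable {n 𝕜 : Type*} [Fintype n] [DecidableEq n] [RCLike 𝕜]

lemma IsHermitian.trace_cfc {M : Matrix n n 𝕜} (hM : M.IsHermitian) (f : ℝ → ℝ) :
    (hM.cfc f).trace = ∑ i, (f (hM.eigenvalues i) : 𝕜) := by
  rw [IsHermitian.cfc, Unitary.conjStarAlgAut_apply, trace_mul_cycle, Unitary.coe_star_mul_self,
    one_mul, trace_diagonal]
  rfl

lemma IsHermitian.star_eigenvectorUnitary_mul_mul_self {M : Matrix n n 𝕜} (hM : M.IsHermitian) :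
    star (hM.eigenvectorUnitary : Matrix n n 𝕜) * M * (hM.eigenvectorUnitary : Matrix n n 𝕜) =
      diagonal (RCLike.ofReal ∘ hM.eigenvalues) := by
  simpa [Unitary.conjStarAlgAut_star_apply] using hM.conjStarAlgAut_star_eigenvectorUnitary

lemma IsHermitian.trace_mul_cfc {M : Matrix n n 𝕜} (hM : M.IsHermitian) (B : Matrix n n 𝕜)
    (f : ℝ → ℝ) :
    (B * hM.cfc f).trace = ∑ i, (star (hM.eigenvectorUnitary : Matrix n n 𝕜) * B *
      (hM.eigenvectorUnitary : Matrix n n 𝕜)) i i * f (hM.eigenvalues i) := by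
  rw [IsHermitian.cfc, Unitary.conjStarAlgAut_apply, ← mul_assoc, trace_mul_cycle,
    ← mul_assoc, trace]
  simp [mul_diagonal]

lemma mul_diagonal_mul_star_apply_self (W : Matrix n n 𝕜) (μ : n → ℝ) (i : n) :
    (W * diagonal (RCLike.ofReal ∘ μ) * star W : Matrix n n 𝕜) i i =
      ∑ j, ((‖W i j‖ ^ 2 * μ j : ℝ) : 𝕜) := by
  rw [mul_apply]
  refine Finset.sum_congr rfl fun j _ => ?_
  rw [mul_diagonal, star_apply, RCLike.star_def, Function.comp_apply, mul_right_comm,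
    RCLike.mul_conj]
  push_cast; ring

lemma of_norm_sq_mem_doublyStochastic {W : Matrix n n 𝕜} (hW : W ∈ unitaryGroup n 𝕜) :
    of (fun i j => ‖W i j‖ ^ 2) ∈ doublyStochastic ℝ n := by
  have row (i : n) : ∑ j, ‖W i j‖ ^ 2 = 1 := by
    have := Matrix.ext_iff.2 (Unitary.mul_star_self_of_mem hW) i i
    simp only [mul_apply, star_apply, RCLike.star_def, RCLike.mul_conj, one_apply_eq] at this
    exact_mod_cast this
  have col (j : n) : ∑ i, ‖W i j‖ ^ 2 = 1 := by
    have := Matrix.ext_iff.2 (Unitary.star_mul_self_of_mem hW) j j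
    simp only [mul_apply, star_apply, RCLike.star_def, RCLike.conj_mul, one_apply_eq] at this
    exact_mod_cast this
  exact mem_doublyStochastic_iff_sum.2 ⟨fun _ _ => sq_nonneg _, row, col⟩

lemma _root_.ConvexOn.sum_map_mulVec_le_of_mem_doublyStochastic {s : Set ℝ} {f : ℝ → ℝ}
    (hf : ConvexOn ℝ s f) {Q : Matrix n n ℝ} (hQ : Q ∈ doublyStochastic ℝ n) {x : n → ℝ}
    (hx : ∀ j, x j ∈ s) :
    ∑ i, f ((Q *ᵥ x) i) ≤ ∑ j, f (x j) :=
  calc ∑ i, f ((Q *ᵥ x) i) ≤ ∑ i, (Q *ᵥ (f ∘ x)) i :=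
        Finset.sum_le_sum fun i _ => by
          simpa [mulVec, dotProduct] using
            hf.map_sum_le (fun j _ => nonneg_of_mem_doublyStochastic hQ)
              (sum_row_of_mem_doublyStochastic hQ i) fun j _ => hx j
    _ = ∑ j, f (x j) := sum_mulVec_of_mem_doublyStochastic hQ

theorem IsHermitian.sum_map_diag_le_trace_cfc {M : Matrix n n 𝕜} (hM : M.IsHermitian) {f : ℝ → ℝ}
    (hf : ConvexOn ℝ Set.univ f) {V : Matrix n n 𝕜} (hV : V ∈ unitaryGroup n 𝕜) :
    ∑ i, f (RCLike.re ((star V * M * V) i i)) ≤ RCLike.re (hM.cfc f).trace := by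
  set W := star V * (hM.eigenvectorUnitary : Matrix n n 𝕜)
  have hW : W ∈ unitaryGroup n 𝕜 := mul_mem (Unitary.star_mem hV) (SetLike.coe_mem _)
  have hdiag (i : n) : RCLike.re ((star V * M * V) i i) =
      (of (fun i j => ‖W i j‖ ^ 2) *ᵥ hM.eigenvalues) i := by
    have : star V * M * V = W * diagonal (RCLike.ofReal ∘ hM.eigenvalues) * star W := by
      conv_lhs => rw [hM.spectral_theorem, Unitary.conjStarAlgAut_apply]
      simp only [W, star_mul, star_star, mul_assoc]
    rw [this, mul_diagonal_mul_star_apply_self, ← RCLike.ofReal_sum, RCLike.ofReal_re]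
    rfl
  simp_rw [hdiag]
  calc _ ≤ ∑ j, f (hM.eigenvalues j) :=
        hf.sum_map_mulVec_le_of_mem_doublyStochastic (of_norm_sq_mem_doublyStochastic hW)
          fun _ => Set.mem_univ _
    _ = _ := by rw [hM.trace_cfc, map_sum]; simp

end Matrix

lemma mexp_of_isHermitian {n : Type*} [Fintype n] [DecidableEq n] {M : Matrix n n ℂ}
    (hM : M.IsHermitian) : mexp M = hM.cfc Real.exp :=
  dif_pos hM

theorem stmt2 {d : Type*} [Fintype d] [DecidableEq d] (H A : Matrix d d ℂ)
    (hH : H.IsHermitian) (hA : A.IsHermitian) (htr : (mexp (-H)).trace = 1) :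
    (mexp (-H + A)).trace.re ≥ Real.exp ((A * mexp (-H)).trace.re) := by
  have hN : (-H).IsHermitian := hH.neg
  have hM : (-H + A).IsHermitian := hN.add hA
  set V : Matrix d d ℂ := (hN.eigenvectorUnitary : Matrix d d ℂ)
  set p : d → ℝ := fun i => Real.exp (hN.eigenvalues i)
  set a : d → ℝ := fun i => ((star V * A * V) i i).re
  have hp : ∑ i, p i = 1 := by
    rw [mexp_of_isHermitian hN, hN.trace_cfc, ← RCLike.ofReal_sum, ← RCLike.ofReal_one] at htr
    exact RCLike.ofReal_injective htr
  have htrace : (A * mexp (-H)).trace.re = ∑ i, p i * a i := by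
    rw [mexp_of_isHermitian hN, hN.trace_mul_cfc, Complex.re_sum]
    exact Finset.sum_congr rfl fun i _ => (Complex.re_mul_ofReal _ _).trans (mul_comm _ _)
  have hdiag (i : d) : hN.eigenvalues i + a i = ((star V * (-H + A) * V) i i).re := by
    rw [mul_add, add_mul, hN.star_eigenvectorUnitary_mul_mul_self]
    simp [a]
  calc Real.exp ((A * mexp (-H)).trace.re) = Real.exp (∑ i, p i * a i) := by rw [htrace]
    _ ≤ ∑ i, p i * Real.exp (a i) := by
      simpa using convexOn_exp.map_sum_le (t := Finset.univ) (fun i _ => (Real.exp_pos _).le) hp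
        fun i _ => Set.mem_univ (a i)
    _ = ∑ i, Real.exp ((star V * (-H + A) * V) i i).re := by
      simp only [p, ← Real.exp_add, hdiag]
    _ ≤ (mexp (-H + A)).trace.re := by
      rw [mexp_of_isHermitian hM]
      exact hM.sum_map_diag_le_trace_cfc convexOn_exp (SetLike.coe_mem _)
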